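/- Let (x₁,y₁),…,(x_N,y_N) be training data with xₙ ∈ ℝ^p and yₙ ∈ {−1,+1}, let C ≥ 0, d ∈ [0, 1/2] and μ > 0, and let R be the regularized double-ramp risk. Then for every w ∈ ℝ^p, b ∈ ℝ and every ρ < 0, reflecting the bandwidth does not increase the risk: R(w, b, ρ) ≥ R(w, b, −ρ). -/

import Mathlib

/-!
With `r(s) = (μ - s)⁺ - (-μ² - s)⁺`, the loss is `d/μ · r(t - ρ) + (1 - d)/μ · r(t + ρ)`, and
reflecting `ρ` swaps the weights `d` and `1 - d`, so
`L(t, ρ) - L(t, -ρ) = (1 - 2d)/μ · (r(t + ρ) - r(t - ρ))`.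
The ramp `r` is antitone and `t + ρ ≤ t - ρ` for `ρ ≤ 0`, so this is nonnegative once `d ≤ 1/2`;
summing with weight `C ≥ 0` gives the claim for the risk.
-/

/-- The double ramp loss on margin `t` with rejection cost `d`, slope `μ`, bandwidth `ρ`. -/
noncomputable def LDR (d μ ρ t : ℝ) : ℝ :=
  d / μ * (max 0 (μ - t + ρ) - max 0 (-μ^2 - t + ρ))
    + (1 - d) / μ * (max 0 (μ - t - ρ) - max 0 (-μ^2 - t - ρ))

/-- The regularized double-ramp risk for training data `x, y`. -/
noncomputable def regRisk {N p : ℕ} (x : Fin N → EuclideanSpace ℝ (Fin p))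
    (y : Fin N → ℝ) (C d μ : ℝ) (w : EuclideanSpace ℝ (Fin p)) (b ρ : ℝ) : ℝ :=
  (1/2) * ‖w‖^2 + C * ∑ n, LDR d μ ρ (y n * ((inner ℝ w (x n) : ℝ) + b))

noncomputable def ramp (μ s : ℝ) : ℝ :=
  max 0 (μ - s) - max 0 (-μ^2 - s)

lemma antitone_max_zero_sub_sub_max_zero_sub {a c : ℝ} (hca : c ≤ a) :
    Antitone fun s : ℝ => max 0 (a - s) - max 0 (c - s) := by
  intro s s' hss'
  dsimp only
  rcases le_total 0 (a - s) with h₁ | h₁ <;>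
  rcases le_total 0 (a - s') with h₂ | h₂ <;>
  rcases le_total 0 (c - s) with h₃ | h₃ <;>
  rcases le_total 0 (c - s') with h₄ | h₄ <;>
  simp only [max_eq_left, max_eq_right, h₁, h₂, h₃, h₄] <;>
  linarith

lemma ramp_antitone {μ : ℝ} (hμ : 0 ≤ μ) : Antitone (ramp μ) :=
  antitone_max_zero_sub_sub_max_zero_sub (by nlinarith)

lemma LDR_eq_ramp (d μ ρ t : ℝ) :
    LDR d μ ρ t = d / μ * ramp μ (t - ρ) + (1 - d) / μ * ramp μ (t + ρ) := by
  simp only [LDR, ramp, sub_add, sub_sub]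

lemma LDR_sub_LDR_neg (d μ ρ t : ℝ) :
    LDR d μ ρ t - LDR d μ (-ρ) t = (1 - 2 * d) / μ * (ramp μ (t + ρ) - ramp μ (t - ρ)) := by
  simp only [LDR_eq_ramp, sub_neg_eq_add, ← sub_eq_add_neg]
  ring

lemma LDR_neg_le {d μ ρ : ℝ} (hd : d ≤ 1 / 2) (hμ : 0 ≤ μ) (hρ : ρ ≤ 0) (t : ℝ) :
    LDR d μ (-ρ) t ≤ LDR d μ ρ t := by
  rw [← sub_nonneg, LDR_sub_LDR_neg]
  have hramp : ramp μ (t - ρ) ≤ ramp μ (t + ρ) := ramp_antitone hμ (by linarith)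
  exact mul_nonneg (div_nonneg (by linarith) hμ) (sub_nonneg.2 hramp)

theorem stmt_7_general {N p : ℕ} (x : Fin N → EuclideanSpace ℝ (Fin p)) (y : Fin N → ℝ)
    (C d μ : ℝ) (hC : 0 ≤ C)
    (hd : d ∈ Set.Icc (0 : ℝ) (1/2)) (hμ : 0 < μ)
    (w : EuclideanSpace ℝ (Fin p)) (b ρ : ℝ) (hρ : ρ < 0) :
    regRisk x y C d μ w b (-ρ) ≤ regRisk x y C d μ w b ρ := by
  unfold regRisk
  gcongr
  exact LDR_neg_le hd.2 hμ.le hρ.le _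

theorem stmt_7 {N p : ℕ} (x : Fin N → EuclideanSpace ℝ (Fin p)) (y : Fin N → ℝ)
    (hy : ∀ n, y n = -1 ∨ y n = 1) (C d μ : ℝ) (hC : 0 ≤ C)
    (hd : d ∈ Set.Icc (0 : ℝ) (1/2)) (hμ : 0 < μ)
    (w : EuclideanSpace ℝ (Fin p)) (b ρ : ℝ) (hρ : ρ < 0) :
    regRisk x y C d μ w b (-ρ) ≤ regRisk x y C d μ w b ρ :=
  stmt_7_general x y C d μ hC hd hμ w b ρ hρ
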